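/- arXiv:1509.03758 — 2 statements merged into one kernel-verified Lean document; each statement's English description precedes it below -/
import Mathlib

section
/- Worpitzky-type identity of type D (primary triangle): for every n ≥ 0 and every real x, 2·Σ_{k=0}^{n} C(x+k, n)·D(n,k) = (2x+1)^n + (−1)^n, where C(y,n) = (y·(y−1)⋯(y−n+1))/n! is the generalized binomial coefficient. -/
/-!
A signed permutation is determined by its word `w = σ(1) ⋯ σ(n)`, and every word of length
`n + 1` arises in exactly one way by inserting `n + 1` or `-(n + 1)` into one of the `n + 1`
slots of a word of length `n`. Inserting into a descent slot of `0, w₁, …, wₙ` (or `n + 1` at the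
end) keeps the number of descents; inserting anywhere else raises it by one. Together with
`C(y, n+1) = C(y, n) (y - n)/(n + 1)` and `C(y+1, n+1) = C(y, n) (y + 1)/(n + 1)` this gives, by
induction on `n` and for every real `c`,
  `∑_w c ^ neg(w) · C(x + des(w), n) = ((1 + c) x + c) ^ n`.
For `c = 1` and `c = -1` this is `(2x + 1) ^ n` and `(-1) ^ n`; their sum counts twice the words
with an even number of negative entries, that is, the elements of `D_n`.
-/

open MeasureTheory Finset

/-- Number of descents of a finite sequence given as a list. -/
def descCount {α : Type*} [LT α] [DecidableRel ((· < ·) : α → α → Prop)] : List α → ℕ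
  | a :: b :: rest => (if b < a then 1 else 0) + descCount (b :: rest)
  | _ => 0

/-- Type A Eulerian number: permutations of {1,…,n} with k descents. -/
def eulerianA (n k : ℕ) : ℕ :=
  Fintype.card {σ : Equiv.Perm (Fin n) // descCount (List.ofFn fun i => σ i) = k}

/-- Eulerian polynomial of type A. -/
noncomputable def polyA (n : ℕ) (t : ℝ) : ℝ :=
  ∑ k ∈ Finset.range (n + 1), (eulerianA n k : ℝ) * t ^ k

/-- The underlying set {-n, …, -1, 0, 1, …, n}. -/
abbrev BSet (n : ℕ) : Type := {x : ℤ // x ∈ Finset.Icc (-(n : ℤ)) (n : ℤ)}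

def negB {n : ℕ} (x : BSet n) : BSet n :=
  ⟨-x.1, by have := x.2; simp only [Finset.mem_Icc] at *; omega⟩

def posB {n : ℕ} (i : Fin n) : BSet n :=
  ⟨((i : ℕ) : ℤ) + 1, by have := i.isLt; simp only [Finset.mem_Icc]; omega⟩

/-- A permutation of {-n,…,n} is a signed permutation if σ(-k) = -σ(k). -/
def IsSigned {n : ℕ} (σ : Equiv.Perm (BSet n)) : Prop :=
  ∀ x : BSet n, (σ (negB x)).1 = -((σ x).1)

noncomputable instance {n : ℕ} (σ : Equiv.Perm (BSet n)) : Decidable (IsSigned σ) :=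
  inferInstanceAs (Decidable (∀ x : BSet n, (σ (negB x)).1 = -((σ x).1)))

/-- Number of descents of the sequence (0, σ(1), …, σ(n)). -/
def descB {n : ℕ} (σ : Equiv.Perm (BSet n)) : ℕ :=
  descCount ((0 : ℤ) :: List.ofFn fun i : Fin n => (σ (posB i)).1)

/-- Number of negative terms among σ(1), …, σ(n). -/
def negCount {n : ℕ} (σ : Equiv.Perm (BSet n)) : ℕ :=
  (Finset.univ.filter fun i : Fin n => (σ (posB i)).1 < 0).card

/-- Type B Eulerian number. -/
noncomputable def eulerianB (n k : ℕ) : ℕ :=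
  Fintype.card {σ : Equiv.Perm (BSet n) // IsSigned σ ∧ descB σ = k}

/-- Primary type D Eulerian number. -/
noncomputable def eulerianD (n k : ℕ) : ℕ :=
  Fintype.card {σ : Equiv.Perm (BSet n) //
    (IsSigned σ ∧ Even (negCount σ)) ∧ descB σ = k}

/-- Complementary type D Eulerian number. -/
noncomputable def eulerianDt (n k : ℕ) : ℕ :=
  Fintype.card {σ : Equiv.Perm (BSet n) //
    (IsSigned σ ∧ ¬ Even (negCount σ)) ∧ descB σ = k}

noncomputable def polyB (n : ℕ) (t : ℝ) : ℝ :=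
  ∑ k ∈ Finset.range (n + 1), (eulerianB n k : ℝ) * t ^ k

noncomputable def polyD (n : ℕ) (t : ℝ) : ℝ :=
  ∑ k ∈ Finset.range (n + 1), (eulerianD n k : ℝ) * t ^ k

noncomputable def polyDt (n : ℕ) (t : ℝ) : ℝ :=
  ∑ k ∈ Finset.range (n + 1), (eulerianDt n k : ℝ) * t ^ k

/-- Generalized binomial coefficient C(y, n) = y(y−1)⋯(y−n+1)/n!. -/
noncomputable def genChoose (y : ℝ) (n : ℕ) : ℝ :=
  (∏ i ∈ Finset.range n, (y - i)) / n.factorial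

section Descents

variable {α : Type*} [LinearOrder α]

theorem descCount_cons_eq_card (d a : α) (l : List α) :
    descCount (a :: l) = #{i ∈ range l.length | l.getD i d < (a :: l).getD i d} := by
  induction l generalizing a with
  | nil => simp [descCount]
  | cons b t ih =>
    rw [card_filter, List.length_cons, sum_range_succ', descCount, ih b, card_filter]
    simp only [List.getD_cons_succ, List.getD_cons_zero]
    omega

theorem descCount_cons_insertIdx_of_forall_lt {d a x : α} {l : List α} {p : ℕ}
    (hp : p ≤ l.length) (ha : a < x) (hl : ∀ y ∈ l, y < x) :
    descCount (a :: l.insertIdx p x) = descCount (a :: l) +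
      if p = l.length ∨ l.getD p d < (a :: l).getD p d then 0 else 1 := by
  induction l generalizing a p with
  | nil =>
    obtain rfl : p = 0 := by simpa using hp
    simp [descCount, not_lt.2 ha.le]
  | cons b t ih =>
    have hb : b < x := hl b (by simp)
    match p with
    | 0 =>
      simp only [List.insertIdx_zero, descCount, List.getD_cons_zero, List.length_cons,
        if_neg (not_lt.2 ha.le), if_pos hb]
      by_cases hba : b < a <;> simp [hba, Nat.add_comm]
    | p + 1 =>
      rw [List.insertIdx_succ_cons]
      simp only [descCount, List.length_cons, List.getD_cons_succ, Nat.add_right_cancel_iff]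
      rw [ih (by simpa using hp) hb fun y hy => hl y (by simp [hy])]
      omega

theorem descCount_cons_insertIdx_of_forall_gt {d a x : α} {l : List α} {p : ℕ}
    (hp : p ≤ l.length) (ha : x < a) (hl : ∀ y ∈ l, x < y) :
    descCount (a :: l.insertIdx p x) = descCount (a :: l) +
      if p < l.length ∧ l.getD p d < (a :: l).getD p d then 0 else 1 := by
  induction l generalizing a p with
  | nil =>
    obtain rfl : p = 0 := by simpa using hp
    simp [descCount, ha]
  | cons b t ih =>
    have hb : x < b := hl b (by simp)
    match p with
    | 0 =>
      simp only [List.insertIdx_zero, descCount, List.getD_cons_zero, List.length_cons,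
        if_pos ha, if_neg (not_lt.2 hb.le)]
      by_cases hba : b < a <;> simp [hba, Nat.add_comm]
    | p + 1 =>
      rw [List.insertIdx_succ_cons]
      simp only [descCount, List.length_cons, List.getD_cons_succ, Nat.add_lt_add_iff_right]
      rw [ih (by simpa using hp) hb fun y hy => hl y (by simp [hy])]
      omega

end Descents

theorem List.ofFn_insertNth {β : Type*} {n : ℕ} (p : Fin (n + 1)) (x : β) (f : Fin n → β) :
    List.ofFn (Fin.insertNth p x f) = (List.ofFn f).insertIdx p x := by
  apply List.ext_getElem (by simp [List.length_insertIdx, p.is_le])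
  intro j hj _
  rw [List.getElem_insertIdx, List.getElem_ofFn]
  split_ifs with h₁ h₂
  · rw [Fin.insertNth_apply_below (Fin.lt_def.2 h₁), eq_rec_constant, List.getElem_ofFn]
    rfl
  · subst h₂
    simp
  · rw [Fin.insertNth_apply_above (Fin.lt_def.2 (by simp only; omega)), eq_rec_constant,
      List.getElem_ofFn]
    rfl

theorem Fin.insertNth_injective {α : Type*} {n : ℕ} {p : Fin (n + 1)} {a : α} {f : Fin n → α}
    (ha : a ∉ Set.range f) (hf : Function.Injective f) :
    Function.Injective (Fin.insertNth p a f) := by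
  intro i j h
  rcases Fin.eq_self_or_eq_succAbove p i with hi | ⟨k, hi⟩ <;>
    rcases Fin.eq_self_or_eq_succAbove p j with hj | ⟨l, hj⟩ <;>
    subst hi hj <;> simp only [Fin.insertNth_apply_same, Fin.insertNth_apply_succAbove] at h
  · rfl
  · exact absurd ⟨l, h.symm⟩ ha
  · exact absurd ⟨k, h⟩ ha
  · rw [hf h]

theorem Fin.sum_ite_val_mem {M : Type*} [AddCommMonoid M] {n : ℕ} {T : Finset ℕ}
    (hT : T ⊆ range n) (a b : M) :
    ∑ i : Fin n, (if (i : ℕ) ∈ T then a else b) = #T • a + (n - #T) • b := by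
  rw [Fin.sum_univ_eq_sum_range (fun i => if i ∈ T then a else b), sum_ite, Finset.sum_const,
    Finset.sum_const, filter_not, filter_mem_eq_inter, inter_eq_right.2 hT,
    card_sdiff_of_subset hT, card_range]

theorem Int.natAbs_sign_mul_le (a b : ℤ) : (a.sign * b).natAbs ≤ b.natAbs := by
  rw [Int.natAbs_mul, Int.natAbs_sign]
  split <;> simp

theorem two_mul_sum_filter_even {ι R : Type*} [Ring R] (s : Finset ι) (m : ι → ℕ) (f : ι → R) :
    2 * ∑ i ∈ s with Even (m i), f i = ∑ i ∈ s, f i + ∑ i ∈ s, (-1) ^ m i * f i := by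
  rw [← sum_add_distrib, sum_filter, mul_sum]
  refine sum_congr rfl fun i _ => ?_
  rcases Nat.even_or_odd (m i) with h | h
  · rw [if_pos h, h.neg_one_pow, one_mul, two_mul]
  · rw [if_neg (Nat.not_even_iff_odd.2 h), h.neg_one_pow, mul_zero, neg_one_mul, add_neg_cancel]

theorem genChoose_succ (y : ℝ) (n : ℕ) :
    genChoose y (n + 1) = genChoose y n * (y - n) / (n + 1) := by
  rw [genChoose, genChoose, prod_range_succ, Nat.factorial_succ]
  push_cast
  field_simp

theorem genChoose_add_one_succ (y : ℝ) (n : ℕ) :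
    genChoose (y + 1) (n + 1) = genChoose y n * (y + 1) / (n + 1) := by
  rw [genChoose, genChoose, prod_range_succ', Nat.factorial_succ]
  push_cast
  simp only [add_sub_add_right_eq_sub, sub_zero]
  field_simp

/-- The weights count the slots: `D + 1` (resp. `D`) of the `n + 1` slots are neutral for
inserting `n + 1` (resp. `-(n + 1)`), and inserting `-(n + 1)` multiplies the weight by `c`. -/
theorem genChoose_insertion_identity (n : ℕ) (c x D : ℝ) :
    (D + 1 + c * D) * genChoose (x + D) (n + 1) +
        (n - D + c * (n + 1 - D)) * genChoose (x + D + 1) (n + 1) =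
      ((1 + c) * x + c) * genChoose (x + D) n := by
  rw [genChoose_succ, genChoose_add_one_succ]
  field_simp
  ring

section SignedPerm

variable {n : ℕ} {σ : Equiv.Perm (BSet n)}

theorem BSet.natAbs_le (x : BSet n) : x.1.natAbs ≤ n := by
  have := mem_Icc.1 x.2
  omega

def BSet.natAbsFin (x : BSet n) : Fin (n + 1) := ⟨x.1.natAbs, Nat.lt_succ_of_le (BSet.natAbs_le x)⟩

theorem BSet.natAbsFin_negB (x : BSet n) : (negB x).natAbsFin = x.natAbsFin :=
  Fin.ext (Int.natAbs_neg x.1)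

theorem BSet.natAbs_eq_natAbs_iff {x y : BSet n} :
    x.1.natAbs = y.1.natAbs ↔ x = y ∨ x = negB y := by
  rw [Int.natAbs_eq_natAbs_iff, Subtype.ext_iff, Subtype.ext_iff]
  rfl

theorem IsSigned.apply_negB (hσ : IsSigned σ) (x : BSet n) : σ (negB x) = negB (σ x) :=
  Subtype.ext (hσ x)

theorem IsSigned.natAbs_apply_eq_iff (hσ : IsSigned σ) {x y : BSet n} :
    (σ x).1.natAbs = (σ y).1.natAbs ↔ x.1.natAbs = y.1.natAbs := by
  rw [BSet.natAbs_eq_natAbs_iff, BSet.natAbs_eq_natAbs_iff, ← hσ.apply_negB,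
    σ.injective.eq_iff, σ.injective.eq_iff]

theorem IsSigned.apply_eq_zero_iff (hσ : IsSigned σ) {x : BSet n} :
    (σ x).1 = 0 ↔ x.1 = 0 := by
  let z : BSet n := ⟨0, by simp⟩
  have hz : (σ z).1 = 0 := by
    have h := hσ z
    rw [show negB z = z from rfl] at h
    omega
  simpa [z, hz] using hσ.natAbs_apply_eq_iff (x := x) (y := z)

theorem negB_negB (x : BSet n) : negB (negB x) = x :=
  Subtype.ext (neg_neg x.1)

theorem IsSigned.ext {τ : Equiv.Perm (BSet n)} (hσ : IsSigned σ) (hτ : IsSigned τ)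
    (h : ∀ i, σ (posB i) = τ (posB i)) : σ = τ := by
  have hpos : ∀ x : BSet n, 0 < x.1 → σ x = τ x := by
    intro x hx
    have hx' : x = posB ⟨(x.1 - 1).toNat, by have := mem_Icc.1 x.2; omega⟩ :=
      Subtype.ext (by simp only [posB]; omega)
    rw [hx', h]
  refine Equiv.ext fun x => ?_
  rcases lt_trichotomy x.1 0 with hx | hx | hx
  · rw [← negB_negB x, hσ.apply_negB, hτ.apply_negB, hpos _ (neg_pos.2 hx)]
  · exact Subtype.ext ((hσ.apply_eq_zero_iff.2 hx).trans (hτ.apply_eq_zero_iff.2 hx).symm)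
  · exact hpos x hx

end SignedPerm

/-- The word `σ(1) ⋯ σ(n)` of a signed permutation `σ`. -/
@[ext]
structure SignedWord (n : ℕ) where
  val : Fin n → ℤ
  ne_zero : ∀ i, val i ≠ 0
  natAbs_le : ∀ i, (val i).natAbs ≤ n
  natAbs_injective : Function.Injective fun i => (val i).natAbs

namespace SignedWord

variable {n : ℕ}

def desc (w : SignedWord n) : ℕ := descCount ((0 : ℤ) :: List.ofFn w.val)

def negCount (w : SignedWord n) : ℕ := #{i | w.val i < 0}

def ofSignedPerm (σ : Equiv.Perm (BSet n)) (hσ : IsSigned σ) : SignedWord n where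
  val i := (σ (posB i)).1
  ne_zero i := by
    rw [Ne, hσ.apply_eq_zero_iff]
    exact (by omega : ((i : ℕ) : ℤ) + 1 ≠ 0)
  natAbs_le i := BSet.natAbs_le _
  natAbs_injective i j h := by
    have := hσ.natAbs_apply_eq_iff.1 h
    simp only [posB] at this
    exact Fin.ext (by omega)

def consZero (w : SignedWord n) : Fin (n + 1) → ℤ := Fin.cons 0 w.val

theorem natAbs_consZero_injective (w : SignedWord n) :
    Function.Injective fun k => (w.consZero k).natAbs := by
  intro k l h
  induction k using Fin.cases <;> induction l using Fin.cases <;>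
    simp only [consZero, Fin.cons_zero, Fin.cons_succ, Int.natAbs_zero, Fin.succ_inj] at h ⊢
  · exact absurd (Int.natAbs_eq_zero.1 h.symm) (w.ne_zero _)
  · exact absurd (Int.natAbs_eq_zero.1 h) (w.ne_zero _)
  · exact w.natAbs_injective h

theorem natAbs_consZero_le (w : SignedWord n) (k : Fin (n + 1)) : (w.consZero k).natAbs ≤ n := by
  induction k using Fin.cases
  · simp [consZero]
  · exact w.natAbs_le _

/-- The signed permutation `x ↦ sign x · w_{|x|}` (with `w₀ = 0`) whose word is `w`. -/
def toFun (w : SignedWord n) (x : BSet n) : BSet n :=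
  ⟨x.1.sign * w.consZero x.natAbsFin, by
    have := (Int.natAbs_sign_mul_le x.1 _).trans (w.natAbs_consZero_le x.natAbsFin)
    rw [mem_Icc]
    omega⟩

theorem natAbs_toFun (w : SignedWord n) (x : BSet n) :
    (w.toFun x).1.natAbs = (w.consZero x.natAbsFin).natAbs := by
  by_cases hx : x.1 = 0
  · have h0 : x.natAbsFin = 0 := Fin.ext (by simp [BSet.natAbsFin, hx])
    simp [toFun, hx, h0, consZero]
  · simp [toFun, Int.natAbs_mul, Int.natAbs_sign_of_ne_zero hx]

theorem toFun_negB (w : SignedWord n) (x : BSet n) : w.toFun (negB x) = negB (w.toFun x) := by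
  apply Subtype.ext
  simp only [toFun, BSet.natAbsFin_negB]
  exact (congrArg (· * _) (Int.sign_neg x.1)).trans (neg_mul _ _)

theorem toFun_posB (w : SignedWord n) (i : Fin n) : (w.toFun (posB i)).1 = w.val i := by
  have hsign : (posB i).1.sign = 1 := Int.sign_eq_one_of_pos (by simp only [posB]; omega)
  have hidx : (posB i).natAbsFin = i.succ :=
    Fin.ext (by simp only [BSet.natAbsFin, posB, Fin.val_succ]; omega)
  simp only [toFun, hsign, hidx, one_mul, consZero, Fin.cons_succ]

theorem toFun_injective (w : SignedWord n) : Function.Injective w.toFun := by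
  intro x y hxy
  have habs : x.1.natAbs = y.1.natAbs := by
    have := congrArg (fun z : BSet n => z.1.natAbs) hxy
    simp only [natAbs_toFun] at this
    exact Fin.val_eq_of_eq (w.natAbs_consZero_injective this)
  rcases BSet.natAbs_eq_natAbs_iff.1 habs with h | rfl
  · exact h
  · rw [toFun_negB] at hxy
    have h0 : (w.toFun y).1 = 0 := by
      have := congrArg Subtype.val hxy
      simp only [negB] at this
      omega
    have hy : y.1.natAbs = 0 := by
      have h := natAbs_toFun w y
      rw [h0, Int.natAbs_zero, eq_comm] at h
      exact congrArg Fin.val (w.natAbs_consZero_injective (a₂ := 0) (by simpa [consZero] using h))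
    exact Subtype.ext (by simp only [negB]; omega)

noncomputable def toPerm (w : SignedWord n) : Equiv.Perm (BSet n) :=
  Equiv.ofBijective w.toFun (Finite.injective_iff_bijective.1 w.toFun_injective)

theorem isSigned_toPerm (w : SignedWord n) : IsSigned w.toPerm :=
  fun x => congrArg Subtype.val (w.toFun_negB x)

variable (n) in
noncomputable def signedPermEquiv : {σ : Equiv.Perm (BSet n) // IsSigned σ} ≃ SignedWord n where
  toFun σ := ofSignedPerm σ.1 σ.2
  invFun w := ⟨w.toPerm, w.isSigned_toPerm⟩
  left_inv σ := Subtype.ext <| IsSigned.ext (isSigned_toPerm _) σ.2 fun i =>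
    Subtype.ext (toFun_posB _ i)
  right_inv w := SignedWord.ext (funext (toFun_posB w))

noncomputable instance : Fintype (SignedWord n) := Fintype.ofEquiv _ (signedPermEquiv n)

def topEntry (n : ℕ) (s : Bool) : ℤ := if s then n + 1 else -(n + 1)

@[simp]
theorem topEntry_true (n : ℕ) : topEntry n true = n + 1 := rfl

@[simp]
theorem topEntry_false (n : ℕ) : topEntry n false = -(n + 1) := rfl

theorem topEntry_injective (n : ℕ) : Function.Injective (topEntry n) := by
  intro s s' h
  cases s <;> cases s' <;> first | rfl | (simp only [topEntry_true, topEntry_false] at h; omega)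

theorem natAbs_topEntry (n : ℕ) (s : Bool) : (topEntry n s).natAbs = n + 1 := by
  unfold topEntry
  split <;> omega

def insertTop (w : SignedWord n) (p : Fin (n + 1)) (s : Bool) : SignedWord (n + 1) where
  val := Fin.insertNth p (topEntry n s) w.val
  ne_zero i := by
    obtain rfl | ⟨k, rfl⟩ := p.eq_self_or_eq_succAbove i
    · rw [Fin.insertNth_apply_same, ← Int.natAbs_ne_zero, natAbs_topEntry]
      omega
    · simpa using w.ne_zero k
  natAbs_le i := by
    obtain rfl | ⟨k, rfl⟩ := p.eq_self_or_eq_succAbove i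
    · rw [Fin.insertNth_apply_same, natAbs_topEntry]
    · simpa using (w.natAbs_le k).trans n.le_succ
  natAbs_injective := by
    have hcomp : (fun i => (Fin.insertNth (α := fun _ => ℤ) p (topEntry n s) w.val i).natAbs) =
        Fin.insertNth p (n + 1) fun k => (w.val k).natAbs := by
      funext i
      obtain rfl | ⟨k, rfl⟩ := p.eq_self_or_eq_succAbove i <;> simp [natAbs_topEntry]
    rw [hcomp]
    refine Fin.insertNth_injective ?_ w.natAbs_injective
    rintro ⟨k, hk⟩
    have := w.natAbs_le k
    simp only at hk
    omega

theorem natAbs_insertTop_eq_iff (w : SignedWord n) (p : Fin (n + 1)) (s : Bool) (j : Fin (n + 1)) :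
    ((w.insertTop p s).val j).natAbs = n + 1 ↔ j = p := by
  obtain rfl | ⟨k, hk⟩ := p.eq_self_or_eq_succAbove j
  · simp [insertTop, natAbs_topEntry]
  · subst hk
    have := w.natAbs_le k
    simp only [insertTop, Fin.insertNth_apply_succAbove, Fin.succAbove_ne, iff_false]
    omega

theorem insertTop_injective :
    Function.Injective fun t : SignedWord n × Fin (n + 1) × Bool => t.1.insertTop t.2.1 t.2.2 := by
  rintro ⟨w, p, s⟩ ⟨w', p', s'⟩ h
  simp only at h
  obtain rfl : p' = p := by
    have hp := (natAbs_insertTop_eq_iff w p s p).2 rfl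
    rw [h, natAbs_insertTop_eq_iff] at hp
    exact hp.symm
  have hval := congrArg SignedWord.val h
  simp only [insertTop, Fin.insertNth_inj] at hval
  rw [topEntry_injective n hval.1, SignedWord.ext hval.2]

theorem exists_natAbs_eq_top (u : SignedWord (n + 1)) : ∃ j, (u.val j).natAbs = n + 1 := by
  let g : Fin (n + 1) → Fin (n + 1) := fun i =>
    ⟨(u.val i).natAbs - 1, by have := u.natAbs_le i; omega⟩
  have hg : Function.Injective g := by
    intro i j h
    have := Fin.val_eq_of_eq h
    have := Int.natAbs_ne_zero.2 (u.ne_zero i)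
    have := Int.natAbs_ne_zero.2 (u.ne_zero j)
    exact u.natAbs_injective (by simp only [g] at *; omega)
  obtain ⟨j, hj⟩ := (Finite.injective_iff_surjective.1 hg) (Fin.last n)
  refine ⟨j, ?_⟩
  have hval : (u.val j).natAbs - 1 = n := Fin.val_eq_of_eq hj
  have := Int.natAbs_ne_zero.2 (u.ne_zero j)
  omega

def eraseTop (u : SignedWord (n + 1)) (j : Fin (n + 1)) (hj : (u.val j).natAbs = n + 1) :
    SignedWord n where
  val k := u.val (j.succAbove k)
  ne_zero k := u.ne_zero _
  natAbs_le k := by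
    have hne : (u.val (j.succAbove k)).natAbs ≠ (u.val j).natAbs :=
      u.natAbs_injective.ne (j.succAbove_ne k)
    have := u.natAbs_le (j.succAbove k)
    omega
  natAbs_injective := u.natAbs_injective.comp Fin.succAbove_right_injective

theorem insertTop_surjective :
    Function.Surjective fun t : SignedWord n × Fin (n + 1) × Bool => t.1.insertTop t.2.1 t.2.2 := by
  intro u
  obtain ⟨j, hj⟩ := u.exists_natAbs_eq_top
  refine ⟨(u.eraseTop j hj, j, decide (0 < u.val j)), SignedWord.ext ?_⟩
  refine Fin.insertNth_eq_iff.2 ⟨?_, rfl⟩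
  show topEntry n (decide (0 < u.val j)) = u.val j
  unfold topEntry
  by_cases h : 0 < u.val j
  · rw [decide_eq_true h, if_pos rfl]
    omega
  · rw [decide_eq_false h, if_neg Bool.false_ne_true]
    omega

variable (n) in
noncomputable def insertTopEquiv : SignedWord n × Fin (n + 1) × Bool ≃ SignedWord (n + 1) :=
  Equiv.ofBijective _ ⟨insertTop_injective, insertTop_surjective⟩

/-- Slot `i < n` lies between the `i`-th and `(i+1)`-st entries of `0, w₁, …, wₙ`. -/
def descentSlots (w : SignedWord n) : Finset ℕ :=
  {i ∈ range n | (List.ofFn w.val).getD i 0 < ((0 : ℤ) :: List.ofFn w.val).getD i 0}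

theorem desc_eq_card_descentSlots (w : SignedWord n) : w.desc = #w.descentSlots := by
  rw [desc, descCount_cons_eq_card 0, List.length_ofFn]
  rfl

theorem desc_le (w : SignedWord n) : w.desc ≤ n := by
  rw [desc_eq_card_descentSlots]
  exact (card_filter_le _ _).trans_eq (card_range n)

/-- The slots at which inserting `topEntry n s` creates no new descent. -/
def neutralSlots (w : SignedWord n) (s : Bool) : Finset ℕ :=
  if s then insert n w.descentSlots else w.descentSlots

theorem neutralSlots_subset (w : SignedWord n) (s : Bool) : w.neutralSlots s ⊆ range (n + 1) := by
  have h : w.descentSlots ⊆ range (n + 1) :=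
    (filter_subset _ _).trans (range_subset_range.2 n.le_succ)
  cases s
  · exact h
  · exact insert_subset (self_mem_range_succ n) h

theorem card_neutralSlots (w : SignedWord n) (s : Bool) :
    #(w.neutralSlots s) = w.desc + if s then 1 else 0 := by
  rw [desc_eq_card_descentSlots]
  cases s
  · rfl
  · have : n ∉ w.descentSlots := fun h => (lt_irrefl n) (mem_range.1 (mem_filter.1 h).1)
    exact card_insert_of_notMem this

theorem desc_insertTop (w : SignedWord n) (p : Fin (n + 1)) (s : Bool) :
    (w.insertTop p s).desc = w.desc + if (p : ℕ) ∈ w.neutralSlots s then 0 else 1 := by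
  have hp : (p : ℕ) ≤ (List.ofFn w.val).length := by simpa using p.is_le
  have hbound : ∀ y ∈ List.ofFn w.val, y.natAbs ≤ n := by
    simpa [List.mem_ofFn] using w.natAbs_le
  simp only [desc, insertTop, List.ofFn_insertNth]
  cases s
  · rw [descCount_cons_insertIdx_of_forall_gt (d := 0) hp (by rw [topEntry_false]; omega)
      fun y hy => by have := hbound y hy; rw [topEntry_false]; omega]
    simp [neutralSlots, descentSlots]
  · rw [descCount_cons_insertIdx_of_forall_lt (d := 0) hp (by rw [topEntry_true]; omega)
      fun y hy => by have := hbound y hy; rw [topEntry_true]; omega]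
    rcases (show (p : ℕ) < n ∨ (p : ℕ) = n by omega) with h | h <;>
      simp [neutralSlots, descentSlots, h]

theorem negCount_insertTop (w : SignedWord n) (p : Fin (n + 1)) (s : Bool) :
    (w.insertTop p s).negCount = w.negCount + if s then 0 else 1 := by
  have htop : (if topEntry n s < 0 then 1 else 0) = if s then 0 else 1 := by
    cases s
    · rw [if_pos (by rw [topEntry_false]; omega)]
      rfl
    · rw [if_neg (by rw [topEntry_true]; omega)]
      rfl
  rw [negCount, negCount, card_filter, card_filter, Fin.sum_univ_succAbove _ p]
  simp only [insertTop, Fin.insertNth_apply_same, Fin.insertNth_apply_succAbove]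
  rw [htop, add_comm]

theorem sum_insertTop (w : SignedWord n) (c x : ℝ) :
    ∑ p, ∑ s, c ^ (w.insertTop p s).negCount * genChoose (x + (w.insertTop p s).desc) (n + 1) =
      ((1 + c) * x + c) * (c ^ w.negCount * genChoose (x + w.desc) n) := by
  have hslot : ∀ p s, c ^ (w.insertTop p s).negCount *
      genChoose (x + (w.insertTop p s).desc) (n + 1) =
      c ^ (w.negCount + if s then 0 else 1) * if (p : ℕ) ∈ w.neutralSlots s
        then genChoose (x + w.desc) (n + 1) else genChoose (x + w.desc + 1) (n + 1) := by
    intro p s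
    rw [negCount_insertTop, desc_insertTop]
    split_ifs <;> push_cast <;> ring_nf
  simp_rw [hslot]
  rw [sum_comm, Fintype.sum_bool]
  simp_rw [← mul_sum]
  rw [Fin.sum_ite_val_mem (w.neutralSlots_subset true),
    Fin.sum_ite_val_mem (w.neutralSlots_subset false), card_neutralSlots, card_neutralSlots]
  have hD := w.desc_le
  simp only [if_true, Bool.false_eq_true, if_false, nsmul_eq_mul]
  rw [Nat.cast_sub (by omega), Nat.cast_sub (by omega)]
  push_cast
  linear_combination c ^ w.negCount * genChoose_insertion_identity n c x w.desc

instance : Unique (SignedWord 0) where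
  default := ⟨Fin.elim0, fun i => i.elim0, fun i => i.elim0, fun i => i.elim0⟩
  uniq _ := SignedWord.ext (funext fun i => i.elim0)

theorem sum_pow_negCount_mul_genChoose (c x : ℝ) (n : ℕ) :
    ∑ w : SignedWord n, c ^ w.negCount * genChoose (x + w.desc) n = ((1 + c) * x + c) ^ n := by
  induction n with
  | zero => simp [negCount, desc, descCount, genChoose]
  | succ n ih =>
    rw [← (insertTopEquiv n).sum_comp, Fintype.sum_prod_type]
    simp_rw [Fintype.sum_prod_type]
    rw [pow_succ, mul_comm, ← ih, mul_sum]
    exact sum_congr rfl fun w _ => sum_insertTop w c x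

end SignedWord

theorem eulerianD_eq_card (n k : ℕ) :
    eulerianD n k = #{w : SignedWord n | Even w.negCount ∧ w.desc = k} := by
  rw [eulerianD, ← Fintype.card_subtype]
  exact Fintype.card_congr <| (Equiv.subtypeEquivRight fun _ => and_assoc).trans <|
    (Equiv.subtypeSubtypeEquivSubtypeInter _ _).symm.trans <|
      (SignedWord.signedPermEquiv n).subtypeEquiv fun _ => Iff.rfl

theorem sum_genChoose_mul_eulerianD (n : ℕ) (x : ℝ) :
    ∑ k ∈ range (n + 1), genChoose (x + k) n * eulerianD n k =
      ∑ w : SignedWord n with Even w.negCount, genChoose (x + w.desc) n := by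
  rw [← sum_fiberwise_of_maps_to (g := SignedWord.desc) (t := range (n + 1))
    fun w _ => mem_range_succ_iff.2 w.desc_le]
  refine sum_congr rfl fun k _ => ?_
  rw [filter_filter, eulerianD_eq_card, mul_comm, ← nsmul_eq_mul, ← sum_const]
  exact sum_congr rfl fun w hw => by rw [(mem_filter.1 hw).2.2]

theorem stmt12 (n : ℕ) (x : ℝ) :
    2 * ∑ k ∈ Finset.range (n + 1), genChoose (x + k) n * (eulerianD n k : ℝ)
      = (2 * x + 1) ^ n + (-1) ^ n := by
  have hplus := SignedWord.sum_pow_negCount_mul_genChoose 1 x n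
  have hminus := SignedWord.sum_pow_negCount_mul_genChoose (-1) x n
  simp only [one_pow, one_mul] at hplus
  rw [sum_genChoose_mul_eulerianD, two_mul_sum_filter_even, hplus, hminus]
  ring_nf
end

section
/- For every n ≥ 0, the polynomials satisfy P^D_n(t) + P^D̃_n(t) = P^B_n(t) and P^D_n(t) − P^D̃_n(t) = (1−t)^n (as identities of polynomials in t); consequently 2·P^D_n(t) = P^B_n(t) + (1−t)^n and 2·P^D̃_n(t) = P^B_n(t) − (1−t)^n. -/
open MeasureTheory Finset

noncomputable def polyBP (n : ℕ) : Polynomial ℝ :=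
  ∑ k ∈ Finset.range (n + 1), Polynomial.C (eulerianB n k : ℝ) * Polynomial.X ^ k

noncomputable def polyDP (n : ℕ) : Polynomial ℝ :=
  ∑ k ∈ Finset.range (n + 1), Polynomial.C (eulerianD n k : ℝ) * Polynomial.X ^ k

noncomputable def polyDtP (n : ℕ) : Polynomial ℝ :=
  ∑ k ∈ Finset.range (n + 1), Polynomial.C (eulerianDt n k : ℝ) * Polynomial.X ^ k


/-!
The first identity holds because `D_n` and `D̃_n` partition `B_n`. For the second, `P^D_n - P^D̃_n`
is the signed sum `∑_{σ ∈ B_n} (-1)^{neg σ} t^{desc σ}`. Write `σ(i) = ±a_i` with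
`a = (|σ(1)|, …, |σ(n)|)` a permutation of `1, …, n`, and sum over the signs for fixed `a`,
peeling letters off the front of the word `(0, ±a_1, …, ±a_n)`. The two signs of a letter cancel
unless `a_i` exceeds the absolute value of the letter before it, in which case they give a factor
`1 - t`; and the rest of the word sees that sign only through `|±a_i| = a_i`. Hence the sum over
signs is `(1 - t)^n` when `a` is increasing and `0` otherwise, and only the identity permutation
is increasing.
-/

theorem descCount_cons_le (a : ℤ) (l : List ℤ) : descCount (a :: l) ≤ l.length := by
  induction l generalizing a with
  | nil => simp [descCount]
  | cons b l ih =>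
    have := ih b
    simp only [descCount, List.length_cons]
    split <;> omega

theorem descB_le {n : ℕ} (σ : Equiv.Perm (BSet n)) : descB σ ≤ n :=
  (descCount_cons_le _ _).trans_eq List.length_ofFn

theorem pow_ite_lt_sub_pow_ite_lt {R : Type*} [Ring R] (t : R) {c x : ℤ} (hx : 0 < x)
    (hcx : |c| ≠ x) :
    t ^ (if x < c then 1 else 0) - t ^ (if -x < c then 1 else 0) =
      if |c| < x then 1 - t else 0 := by
  rcases abs_cases c with ⟨hc, _⟩ | ⟨hc, _⟩ <;> rw [hc] at hcx ⊢ <;>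
    split_ifs <;> first | omega | simp

theorem sum_signs_mul_pow_descCount {R : Type*} [CommRing R] (t : R) {n : ℕ} (c : ℤ)
    (a : Fin n → ℤ) (ha : ∀ i, 0 < a i)
    (hinj : Function.Injective (Fin.cons |c| a : Fin (n + 1) → ℤ)) :
    ∑ ε : Fin n → Bool, (∏ i, if ε i then (-1 : R) else 1) *
        t ^ descCount (c :: List.ofFn fun i => if ε i then -a i else a i) =
      if StrictMono (Fin.cons |c| a : Fin (n + 1) → ℤ) then (1 - t) ^ n else 0 := by
  induction n generalizing c with
  | zero => simp [descCount, Subsingleton.strictMono]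
  | succ n ih =>
    obtain ⟨hc, hainj⟩ := Fin.cons_injective_iff.mp hinj
    have htail (y : ℤ) (hy : |y| = a 0) :
        ∑ ε : Fin n → Bool, (∏ i, if ε i then (-1 : R) else 1) *
            t ^ descCount (y :: List.ofFn fun i => if ε i then -a i.succ else a i.succ) =
          if StrictMono a then (1 - t) ^ n else 0 := by
      simpa only [hy, Fin.cons_self_tail, Fin.tail] using
        ih y (Fin.tail a) (fun i => ha _) (by rwa [hy, Fin.cons_self_tail])
    have hfactor (s u : R) (f g : (Fin n → Bool) → R) :
        ∑ x, (s * f x) * (u * g x) = s * u * ∑ x, f x * g x := by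
      rw [Finset.mul_sum]; exact Finset.sum_congr rfl fun _ _ => by ring
    have hmono : StrictMono (Fin.cons |c| a : Fin (n + 2) → ℤ) ↔ |c| < a 0 ∧ StrictMono a :=
      strictMono_vecCons
    rw [← (Fin.consEquiv fun _ => Bool).sum_comp, Fintype.sum_prod_type, Fintype.sum_bool]
    simp only [Fin.consEquiv_apply, Fin.prod_univ_succ, Fin.cons_zero, Fin.cons_succ,
      List.ofFn_succ, descCount, pow_add, if_true, if_false, Bool.false_eq_true]
    rw [hfactor, hfactor, htail _ (by rw [abs_neg, abs_of_pos (ha 0)]),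
      htail _ (abs_of_pos (ha 0))]
    simp only [hmono, ite_and]
    linear_combination (norm := skip) (if StrictMono a then (1 - t) ^ n else 0) *
      pow_ite_lt_sub_pow_ite_lt t (ha 0) (fun h => hc ⟨0, h.symm⟩)
    split_ifs <;> ring

section SignedPerm

variable {n : ℕ}

def zeroB (n : ℕ) : BSet n := ⟨0, by simp⟩

def BSet.index (x : BSet n) (hx : x.1 ≠ 0) : Fin n :=
  ⟨x.1.natAbs - 1, by have := Finset.mem_Icc.mp x.2; omega⟩

theorem BSet.eq_of_index_eq {x y : BSet n} {hx : x.1 ≠ 0} {hy : y.1 ≠ 0}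
    (h : x.index hx = y.index hy) (hs : x.1 < 0 ↔ y.1 < 0) : x = y := by
  have := congrArg Fin.val h
  simp only [BSet.index] at this
  exact Subtype.ext (by omega)

theorem BSet.index_posB (i : Fin n) : (posB i).index (by simp [posB]; omega) = i :=
  Fin.ext (by simp [BSet.index, posB]; omega)

def signedSucc (b : Bool) (j : Fin n) : ℤ := if b then -((j : ℤ) + 1) else (j : ℤ) + 1

theorem signedSucc_mem (b : Bool) (j : Fin n) : signedSucc b j ∈ Finset.Icc (-(n : ℤ)) n := by
  have := j.isLt
  unfold signedSucc; split <;> simp only [Finset.mem_Icc] <;> omega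

theorem signedSucc_neg_iff (b : Bool) (j : Fin n) : signedSucc b j < 0 ↔ b := by
  unfold signedSucc; cases b <;> simp <;> omega

theorem signedSucc_ne_zero (b : Bool) (j : Fin n) : signedSucc b j ≠ 0 := by
  unfold signedSucc; split <;> omega

theorem signedSucc_not (b : Bool) (j : Fin n) : signedSucc (!b) j = -signedSucc b j := by
  cases b <;> simp [signedSucc]

theorem signedSucc_inj {b b' : Bool} {j j' : Fin n} :
    signedSucc b j = signedSucc b' j' ↔ b = b' ∧ j = j' := by
  refine ⟨fun h => ?_, fun ⟨hb, hj⟩ => hb ▸ hj ▸ rfl⟩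
  rw [Fin.ext_iff]
  unfold signedSucc at h
  cases b <;> cases b' <;> simp at h ⊢ <;> omega

theorem signedSucc_index (x : BSet n) (hx : x.1 ≠ 0) :
    signedSucc (decide (x.1 < 0)) (x.index hx) = x.1 := by
  have := Finset.mem_Icc.mp x.2
  unfold signedSucc BSet.index
  by_cases h : x.1 < 0 <;> simp [h] <;> omega

/-- The signed permutation sending `±(i + 1)` to `±signedSucc (ε i) (π i)`. -/
def signedPermFun (π : Equiv.Perm (Fin n)) (ε : Fin n → Bool) (x : BSet n) : BSet n :=
  if hx : x.1 = 0 then x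
  else ⟨signedSucc (decide (x.1 < 0) ^^ ε (x.index hx)) (π (x.index hx)), signedSucc_mem _ _⟩

theorem signedPermFun_injective (π : Equiv.Perm (Fin n)) (ε : Fin n → Bool) :
    Function.Injective (signedPermFun π ε) := by
  intro x y h
  unfold signedPermFun at h
  by_cases hx : x.1 = 0 <;> by_cases hy : y.1 = 0 <;> simp only [hx, hy, dite_true, dite_false,
    Subtype.ext_iff] at h
  · exact Subtype.ext (hx.trans hy.symm)
  · exact (signedSucc_ne_zero _ _ h.symm).elim
  · exact (signedSucc_ne_zero _ _ h).elim
  · obtain ⟨hs, hj⟩ := signedSucc_inj.mp h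
    have hj := π.injective hj
    rw [hj, Bool.xor_left_inj, decide_eq_decide] at hs
    exact BSet.eq_of_index_eq hj hs

noncomputable def signedPerm (π : Equiv.Perm (Fin n)) (ε : Fin n → Bool) : Equiv.Perm (BSet n) :=
  Equiv.ofBijective _ (Finite.injective_iff_bijective.mp (signedPermFun_injective π ε))

theorem signedPerm_posB (π : Equiv.Perm (Fin n)) (ε : Fin n → Bool) (i : Fin n) :
    (signedPerm π ε (posB i)).1 = signedSucc (ε i) (π i) := by
  have hpos : (posB i).1 ≠ 0 := by simp [posB]; omega
  have hneg : ¬ (posB i).1 < 0 := by simp [posB]; omega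
  simp only [signedPerm, Equiv.ofBijective_apply, signedPermFun, hpos, dite_false, hneg,
    decide_false, Bool.false_xor, BSet.index_posB]

theorem isSigned_signedPerm (π : Equiv.Perm (Fin n)) (ε : Fin n → Bool) :
    IsSigned (signedPerm π ε) := by
  intro x
  by_cases hx : x.1 = 0
  · have hnx : (negB x).1 = 0 := by simp [negB, hx]
    simp [signedPerm, signedPermFun, hx, hnx]
  · have hnx : (negB x).1 ≠ 0 := by simp [negB, hx]
    have hidx : (negB x).index hnx = x.index hx := Fin.ext (by simp [BSet.index, negB])
    have hsign : decide ((negB x).1 < 0) = !decide (x.1 < 0) := by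
      simp only [negB]; by_cases h : x.1 < 0 <;> simp [h] <;> omega
    simp only [signedPerm, Equiv.ofBijective_apply, signedPermFun, hx, hnx, dite_false, hidx,
      hsign, Bool.not_xor, signedSucc_not]

end SignedPerm

section IsSigned

variable {n : ℕ} {σ : Equiv.Perm (BSet n)}

theorem IsSigned.apply_zeroB (hσ : IsSigned σ) : σ (zeroB n) = zeroB n := by
  have h := hσ (zeroB n)
  rw [show negB (zeroB n) = zeroB n from rfl] at h
  exact Subtype.ext (by simp only [zeroB] at h ⊢; omega)

theorem IsSigned.apply_posB_ne_zero (hσ : IsSigned σ) (i : Fin n) : (σ (posB i)).1 ≠ 0 := by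
  intro h
  have := congrArg Subtype.val (σ.injective ((Subtype.ext h).trans hσ.apply_zeroB.symm))
  simp [posB, zeroB] at this
  omega

def signsOf (σ : Equiv.Perm (BSet n)) (i : Fin n) : Bool := decide ((σ (posB i)).1 < 0)

theorem IsSigned.index_injective (hσ : IsSigned σ) :
    Function.Injective fun i => (σ (posB i)).index (hσ.apply_posB_ne_zero i) := by
  intro i j h
  have habs : (σ (posB i)).1.natAbs = (σ (posB j)).1.natAbs := by
    have := congrArg Fin.val h
    have := hσ.apply_posB_ne_zero i
    have := hσ.apply_posB_ne_zero j
    simp only [BSet.index] at *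
    omega
  rcases Int.natAbs_eq_natAbs_iff.mp habs with h' | h'
  · have := congrArg Subtype.val (σ.injective (Subtype.ext h'))
    simp only [posB] at this
    exact Fin.ext (by omega)
  · rw [← hσ] at h'
    have := congrArg Subtype.val (σ.injective (Subtype.ext h'))
    simp only [posB, negB] at this
    omega

noncomputable def IsSigned.absPerm (hσ : IsSigned σ) : Equiv.Perm (Fin n) :=
  Equiv.ofBijective _ (Finite.injective_iff_bijective.mp hσ.index_injective)

theorem IsSigned.signedPerm_absPerm (hσ : IsSigned σ) : signedPerm hσ.absPerm (signsOf σ) = σ :=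
  (isSigned_signedPerm _ _).ext hσ fun i => Subtype.ext <| by
    rw [signedPerm_posB, IsSigned.absPerm, Equiv.ofBijective_apply, signsOf, signedSucc_index]

end IsSigned

theorem signedPerm_injective {n : ℕ} :
    Function.Injective fun p : Equiv.Perm (Fin n) × (Fin n → Bool) => signedPerm p.1 p.2 := by
  rintro ⟨π, ε⟩ ⟨π', ε'⟩ h
  have hi (i : Fin n) : ε i = ε' i ∧ π i = π' i := signedSucc_inj.mp <| by
    rw [← signedPerm_posB π ε i, ← signedPerm_posB π' ε' i]
    exact congrArg (fun σ : Equiv.Perm (BSet n) => (σ (posB i)).1) h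
  exact Prod.ext (Equiv.ext fun i => (hi i).2) (funext fun i => (hi i).1)

theorem sum_isSigned_eq_sum_signedPerm {n : ℕ} {M : Type*} [AddCommMonoid M]
    (f : Equiv.Perm (BSet n) → M) :
    ∑ σ ∈ Finset.univ.filter IsSigned, f σ =
      ∑ π : Equiv.Perm (Fin n), ∑ ε : Fin n → Bool, f (signedPerm π ε) := by
  rw [← Fintype.sum_prod_type']
  refine (Finset.sum_bij (fun p _ => signedPerm p.1 p.2) (fun p _ => ?_)
    (fun p _ q _ h => signedPerm_injective h) (fun σ hσ => ?_) (fun _ _ => rfl)).symm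
  · exact Finset.mem_filter.mpr ⟨Finset.mem_univ _, isSigned_signedPerm _ _⟩
  · have hσ := (Finset.mem_filter.mp hσ).2
    exact ⟨(hσ.absPerm, signsOf σ), Finset.mem_univ _, hσ.signedPerm_absPerm⟩

theorem strictMono_cons_zero_perm_succ_iff {n : ℕ} (π : Equiv.Perm (Fin n)) :
    StrictMono (Fin.cons 0 fun i => ((π i : ℕ) : ℤ) + 1 : Fin (n + 1) → ℤ) ↔ π = 1 := by
  rw [Fin.strictMono_cons]
  refine ⟨fun ⟨_, hmono⟩ => ?_, fun h => ⟨fun j => by omega, fun i j hij => ?_⟩⟩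
  · have hπ : StrictMono π := fun i j hij => by
      have := hmono hij
      simp only [add_lt_add_iff_right, Nat.cast_lt, Fin.val_fin_lt] at this
      exact this
    exact Equiv.ext fun i => congrFun hπ.eq_id i
  · subst h
    simpa using hij

theorem sum_isSigned_neg_one_pow_mul_pow_descB {R : Type*} [CommRing R] (n : ℕ) (t : R) :
    ∑ σ ∈ Finset.univ.filter (IsSigned (n := n)), (-1 : R) ^ negCount σ * t ^ descB σ =
      (1 - t) ^ n := by
  have hword (π : Equiv.Perm (Fin n)) (ε : Fin n → Bool) :
      (-1 : R) ^ negCount (signedPerm π ε) * t ^ descB (signedPerm π ε) =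
        (∏ i, if ε i then (-1 : R) else 1) *
          t ^ descCount (0 :: List.ofFn fun i => signedSucc (ε i) (π i)) := by
    simp only [negCount, descB, signedPerm_posB, signedSucc_neg_iff, Finset.prod_ite,
      Finset.prod_const, one_pow, mul_one]
  have hperm (π : Equiv.Perm (Fin n)) :=
    sum_signs_mul_pow_descCount t 0 (fun i => ((π i : ℕ) : ℤ) + 1) (fun i => by omega)
      (Fin.cons_injective_iff.mpr ⟨fun ⟨i, hi⟩ => by simp at hi; omega,
        fun i j h => π.injective (Fin.ext (by simpa using h))⟩)
  simp only [abs_zero, strictMono_cons_zero_perm_succ_iff] at hperm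
  rw [sum_isSigned_eq_sum_signedPerm]
  simp only [hword]
  exact (Fintype.sum_congr _ _ hperm).trans (Fintype.sum_ite_eq' 1 _)

theorem sum_neg_one_pow_mul {ι R : Type*} [Ring R] (s : Finset ι) (g : ι → ℕ) (f : ι → R) :
    ∑ i ∈ s, (-1 : R) ^ g i * f i =
      ∑ i ∈ s.filter (fun i => Even (g i)), f i - ∑ i ∈ s.filter (fun i => ¬ Even (g i)), f i := by
  rw [← Finset.sum_filter_add_sum_filter_not s (fun i => Even (g i)), sub_eq_add_neg,
    ← Finset.sum_neg_distrib]
  congr 1 <;> refine Finset.sum_congr rfl fun i hi => ?_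
  · rw [(Finset.mem_filter.mp hi).2.neg_one_pow, one_mul]
  · rw [(Nat.not_even_iff_odd.mp (Finset.mem_filter.mp hi).2).neg_one_pow, neg_one_mul]

theorem sum_range_card_mul_pow {α A : Type*} [Fintype α] [Semiring A] (P : α → Prop)
    [DecidablePred P] (f : α → ℕ) {n : ℕ} (hf : ∀ x, f x ≤ n) (t : A) :
    ∑ k ∈ Finset.range (n + 1), (Fintype.card {x // P x ∧ f x = k} : A) * t ^ k =
      ∑ x ∈ Finset.univ.filter P, t ^ f x := by
  rw [← Finset.sum_fiberwise_of_maps_to (g := f) (t := Finset.range (n + 1))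
    fun x _ => Finset.mem_range.mpr (Nat.lt_succ_of_le (hf x))]
  refine Finset.sum_congr rfl fun k _ => ?_
  rw [Finset.sum_congr rfl fun x hx => by rw [(Finset.mem_filter.mp hx).2], Finset.sum_const,
    nsmul_eq_mul, Fintype.card_subtype, Finset.filter_filter]

theorem stmt14 (n : ℕ) :
    polyDP n + polyDtP n = polyBP n ∧
    polyDP n - polyDtP n = (1 - Polynomial.X) ^ n ∧
    2 * polyDP n = polyBP n + (1 - Polynomial.X) ^ n ∧
    2 * polyDtP n = polyBP n - (1 - Polynomial.X) ^ n := by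
  set S := Finset.univ.filter (IsSigned (n := n)) with hS
  have hgen (P : Equiv.Perm (BSet n) → Prop) [DecidablePred P] :=
    sum_range_card_mul_pow P descB descB_le (Polynomial.X : Polynomial ℝ)
  have hB : polyBP n = ∑ σ ∈ S, Polynomial.X ^ descB σ := by
    simpa only [polyBP, eulerianB, Polynomial.C_eq_natCast] using hgen IsSigned
  have hD : polyDP n = ∑ σ ∈ S.filter (fun σ => Even (negCount σ)), Polynomial.X ^ descB σ := by
    simpa only [polyDP, eulerianD, Polynomial.C_eq_natCast, hS, Finset.filter_filter] using
      hgen fun σ => IsSigned σ ∧ Even (negCount σ)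
  have hDt : polyDtP n = ∑ σ ∈ S.filter (fun σ => ¬ Even (negCount σ)), Polynomial.X ^ descB σ := by
    simpa only [polyDtP, eulerianDt, Polynomial.C_eq_natCast, hS, Finset.filter_filter] using
      hgen fun σ => IsSigned σ ∧ ¬ Even (negCount σ)
  have h1 : polyDP n + polyDtP n = polyBP n := by
    rw [hD, hDt, hB, Finset.sum_filter_add_sum_filter_not]
  have h2 : polyDP n - polyDtP n = (1 - Polynomial.X) ^ n := by
    rw [hD, hDt, ← sum_neg_one_pow_mul, sum_isSigned_neg_one_pow_mul_pow_descB]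
  exact ⟨h1, h2, by linear_combination h1 + h2, by linear_combination h1 - h2⟩
end
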